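/- arXiv:1712.02450 — 2 statements merged into one kernel-verified Lean document; each statement's English description precedes it below -/
import Mathlib

section
/- Let H and K be Hilbert C*-modules over a C*-algebra A and let T : H → K be an adjointable map. Then T is surjective if and only if T* is bounded below in norm, i.e., there exists m > 0 such that ‖T*y‖ ≥ m‖y‖ for all y ∈ K. -/
/-!
If `T` is onto, the open mapping theorem gives preimages `x` of `y` with `‖x‖ ≤ C ‖y‖`, and
Cauchy–Schwarz in `‖y‖² = ‖⟪x, T* y⟫‖` yields `‖y‖ ≤ C ‖T* y‖`.

Conversely, if `m ‖y‖ ≤ ‖T* y‖`, then `S = T T*` satisfies `0 ≤ ⟪S y, y⟫ = ⟪T* y, T* y⟫`, so for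
every `t ≥ 0` the positivity of `t ⟪y, y⟫` gives `m² ‖y‖ ≤ ‖(S + t) y‖`. Hence the inverses of
the `S + t` that are invertible are bounded by `m⁻²`, uniformly in `t`. Since `S + t` is invertible
for large `t` and invertibility persists under perturbations smaller than `‖(S + t)⁻¹‖⁻¹`, we can
walk `t` down to `0` in steps of fixed size: `S` is invertible, so `T` is onto.
-/

/-- The December 2024 Mathlib `CStarModule` (right `Aᵐᵒᵖ`-action), restated verbatim
under a new name because Mathlib's `CStarModule` now uses a left `A`-action. -/
class CStarModuleOld (A : outParam <| Type*) (E : Type*) [NonUnitalSemiring A] [StarRing A]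
    [Module ℂ A] [AddCommGroup E] [Module ℂ E] [PartialOrder A] [SMul Aᵐᵒᵖ E] [Norm A] [Norm E]
    extends Inner A E where
  inner_add_right {x} {y} {z} : inner x (y + z) = inner x y + inner x z
  inner_self_nonneg {x} : 0 ≤ inner x x
  inner_self {x} : inner x x = 0 ↔ x = 0
  inner_op_smul_right {a : A} {x y : E} : inner x (MulOpposite.op a • y) = inner x y * a
  inner_smul_right_complex {z : ℂ} {x} {y} : inner x (z • y) = z • inner x y
  star_inner x y : star (inner x y) = inner y x
  norm_eq_sqrt_norm_inner_self x : ‖x‖ = √‖inner x x‖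

section UniformResolventBound

variable {R : Type*} [NormedRing R] [NormOneClass R] [CompleteSpace R]

theorem IsUnit.of_norm_sub_lt_inv {x y : R} {C : ℝ} (hx : IsUnit x)
    (hxC : ‖Ring.inverse x‖ ≤ C) (hy : ‖y - x‖ < C⁻¹) : IsUnit y := by
  have := NormOneClass.nontrivial (G := R)
  obtain ⟨u, rfl⟩ := hx
  rw [Ring.inverse_unit] at hxC
  exact (u.ofNearby y (hy.trans_le (inv_anti₀ (Units.norm_pos u⁻¹) hxC))).isUnit

variable [NormedAlgebra ℝ R]

theorem isUnit_add_algebraMap_of_norm_lt (a : R) {t : ℝ} (ht : ‖a‖ < t) :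
    IsUnit (a + algebraMap ℝ R t) := by
  have ht' : ‖a‖ < ‖-t‖ := by rwa [norm_neg, Real.norm_of_nonneg ((norm_nonneg a).trans ht.le)]
  have h := spectrum.mem_resolventSet_iff.mp (spectrum.mem_resolventSet_of_norm_lt ht')
  simpa [add_comm] using h.neg

/-- Junk values make the hypothesis vacuous at those `t` for which `a + t` is not invertible. -/
theorem isUnit_of_forall_nonneg_norm_inverse_add_algebraMap_le {a : R} {C : ℝ} (hC : 0 < C)
    (h : ∀ t : ℝ, 0 ≤ t → ‖Ring.inverse (a + algebraMap ℝ R t)‖ ≤ C) : IsUnit a := by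
  set δ : ℝ := (2 * C)⁻¹
  have hδ : 0 < δ := by positivity
  have descend : ∀ n : ℕ, ∀ t : ℝ, 0 ≤ t → ‖a‖ < t + n * δ → IsUnit (a + algebraMap ℝ R t) := by
    intro n
    induction n with
    | zero => exact fun t _ ht => isUnit_add_algebraMap_of_norm_lt a (by simpa using ht)
    | succ n ih =>
      intro t ht htn
      have hnext := ih (t + δ) (by positivity) (by push_cast at htn; linarith)
      refine hnext.of_norm_sub_lt_inv (h _ (by positivity)) ?_
      rw [add_sub_add_left_eq_sub, ← map_sub, norm_algebraMap', sub_add_cancel_left, norm_neg,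
        Real.norm_of_nonneg hδ.le]
      exact inv_strictAnti₀ hC (by linarith)
  obtain ⟨n, hn⟩ := exists_nat_gt (‖a‖ / δ)
  simpa using descend n 0 le_rfl (by simpa [div_lt_iff₀ hδ] using hn)

end UniformResolventBound

namespace ContinuousLinearMap

variable {E : Type*} [NormedAddCommGroup E]

theorem norm_inverse_le_of_forall_mul_norm_le {𝕜 : Type*} [NontriviallyNormedField 𝕜]
    [NormedSpace 𝕜 E] (S : E →L[𝕜] E) {c : ℝ} (hc : 0 < c)
    (hS : ∀ y, c * ‖y‖ ≤ ‖S y‖) : ‖Ring.inverse S‖ ≤ c⁻¹ := by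
  by_cases hunit : IsUnit S
  · obtain ⟨u, rfl⟩ := hunit
    rw [Ring.inverse_unit]
    refine opNorm_le_bound _ (by positivity) fun z => ?_
    have hz := hS ((↑u⁻¹ : E →L[𝕜] E) z)
    rwa [show (u : E →L[𝕜] E) ((↑u⁻¹ : E →L[𝕜] E) z) = z from congr($(u.mul_inv) z),
      ← le_inv_mul_iff₀ hc] at hz
  · rw [Ring.inverse_non_unit _ hunit, norm_zero]
    positivity

theorem surjective_of_forall_nonneg_mul_norm_le_norm_add_smul [NormedSpace ℂ E] [CompleteSpace E]
    (S : E →L[ℂ] E) {c : ℝ} (hc : 0 < c)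
    (hS : ∀ t : ℝ, 0 ≤ t → ∀ y, c * ‖y‖ ≤ ‖S y + t • y‖) : Function.Surjective S := by
  rcases subsingleton_or_nontrivial E with hE | hE
  · exact fun y => ⟨0, Subsingleton.elim _ _⟩
  obtain ⟨u, rfl⟩ : IsUnit S :=
    isUnit_of_forall_nonneg_norm_inverse_add_algebraMap_le (inv_pos.mpr hc) fun t ht =>
      norm_inverse_le_of_forall_mul_norm_le _ hc fun y => by simpa using hS t ht y
  exact (ContinuousLinearEquiv.unitsEquiv ℂ E u).surjective

end ContinuousLinearMap

namespace CStarModuleOld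

variable {A E : Type*} [NonUnitalCStarAlgebra A] [PartialOrder A]
  [NormedAddCommGroup E] [NormedSpace ℂ E] [SMul Aᵐᵒᵖ E] [CStarModuleOld A E]

theorem inner_zero_right {x : E} : (inner A x (0 : E) : A) = 0 := by
  simpa using inner_smul_right_complex (A := A) (z := (0 : ℂ)) (x := x) (y := (0 : E))

theorem inner_zero_left {x : E} : (inner A (0 : E) x : A) = 0 := by
  rw [← star_inner x, inner_zero_right, star_zero]

theorem inner_add_left {x y z : E} : (inner A (x + y) z : A) = inner A x z + inner A y z := by
  rw [← star_inner z, inner_add_right, star_add, star_inner, star_inner]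

theorem inner_op_smul_left {a : A} {x y : E} :
    (inner A (MulOpposite.op a • x) y : A) = star a * inner A x y := by
  rw [← star_inner y, inner_op_smul_right, star_mul, star_inner]

theorem inner_sub_right {x y z : E} : (inner A x (y - z) : A) = inner A x y - inner A x z := by
  rw [sub_eq_add_neg, ← neg_one_smul ℂ z, inner_add_right, inner_smul_right_complex, neg_one_smul,
    ← sub_eq_add_neg]

theorem inner_sub_left {x y z : E} : (inner A (x - y) z : A) = inner A x z - inner A y z := by
  rw [← star_inner z, inner_sub_right, star_sub, star_inner, star_inner]

theorem inner_smul_right_real {r : ℝ} {x y : E} : (inner A x (r • y) : A) = r • inner A x y := by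
  rw [← Complex.coe_smul, inner_smul_right_complex, Complex.coe_smul]

theorem inner_smul_left_real {r : ℝ} {x y : E} : (inner A (r • x) y : A) = r • inner A x y := by
  rw [← star_inner y, inner_smul_right_real, star_smul, star_inner, star_trivial]

theorem norm_sq_eq_norm_inner_self {x : E} : ‖x‖ ^ 2 = ‖(inner A x x : A)‖ := by
  rw [norm_eq_sqrt_norm_inner_self (A := A) x, Real.sq_sqrt (norm_nonneg _)]

variable [StarOrderedRing A]

theorem inner_mul_inner_swap_le {x y : E} :
    (inner A y x : A) * inner A x y ≤ ‖x‖ ^ 2 • (inner A y y : A) := by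
  rcases eq_or_ne x 0 with rfl | hx
  · simp [inner_zero_right, inner_zero_left]
  -- expand `0 ≤ ⟪x a - ‖x‖² y, x a - ‖x‖² y⟫` and take `a = ⟪x, y⟫`
  have h₁ : ∀ a : A, (0 : A) ≤ ‖x‖ ^ 2 • (star a * a) - ‖x‖ ^ 2 • (star a * inner A x y)
      - ‖x‖ ^ 2 • (inner A y x * a) + ‖x‖ ^ 2 • (‖x‖ ^ 2 • (inner A y y : A)) := fun a => by
    calc (0 : A) ≤ inner A (MulOpposite.op a • x - ‖x‖ ^ 2 • y)
            (MulOpposite.op a • x - ‖x‖ ^ 2 • y) := inner_self_nonneg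
      _ = star a * inner A x x * a - ‖x‖ ^ 2 • (star a * inner A x y)
            - ‖x‖ ^ 2 • (inner A y x * a) + ‖x‖ ^ 2 • (‖x‖ ^ 2 • (inner A y y : A)) := by
          simp only [inner_sub_right, inner_op_smul_right, inner_sub_left, inner_op_smul_left,
            inner_smul_left_real, inner_smul_right_real, smul_sub,
            smul_mul_assoc, mul_assoc, sub_mul]
          abel
      _ ≤ ‖x‖ ^ 2 • (star a * a) - ‖x‖ ^ 2 • (star a * inner A x y)
            - ‖x‖ ^ 2 • (inner A y x * a) + ‖x‖ ^ 2 • (‖x‖ ^ 2 • (inner A y y : A)) := by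
          gcongr
          calc star a * inner A x x * a ≤ ‖(inner A x x : A)‖ • (star a * a) :=
                CStarAlgebra.star_left_conjugate_le_norm_smul (star_inner x x)
            _ = ‖x‖ ^ 2 • (star a * a) := by rw [norm_sq_eq_norm_inner_self (A := A)]
  specialize h₁ (inner A x y)
  simp only [star_inner, sub_self, zero_sub, le_neg_add_iff_add_le, add_zero] at h₁
  rwa [smul_le_smul_iff_of_pos_left (pow_pos (norm_pos_iff.mpr hx) _)] at h₁

variable (A) in
theorem norm_inner_le {x y : E} : ‖(inner A x y : A)‖ ≤ ‖x‖ * ‖y‖ := by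
  refine pow_le_pow_iff_left₀ (norm_nonneg _) (by positivity) two_ne_zero |>.mp ?_
  calc ‖(inner A x y : A)‖ ^ 2 = ‖(inner A y x : A) * inner A x y‖ := by
        rw [← star_inner x y, CStarRing.norm_star_mul_self, pow_two]
    _ ≤ ‖‖x‖ ^ 2 • (inner A y y : A)‖ := by
        refine CStarAlgebra.norm_le_norm_of_nonneg_of_le ?_ inner_mul_inner_swap_le
        rw [← star_inner x y]
        exact star_mul_self_nonneg _
    _ = (‖x‖ * ‖y‖) ^ 2 := by
        rw [norm_smul, Real.norm_of_nonneg (by positivity), ← norm_sq_eq_norm_inner_self, mul_pow]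

theorem mul_norm_le_norm_add_smul {x y : E} {c t : ℝ} (ht : 0 ≤ t) (hxy : 0 ≤ (inner A x y : A))
    (hc : c * ‖y‖ ^ 2 ≤ ‖(inner A x y : A)‖) : c * ‖y‖ ≤ ‖x + t • y‖ := by
  rcases eq_or_ne y 0 with rfl | hy
  · simp
  refine le_of_mul_le_mul_right ?_ (norm_pos_iff.mpr hy)
  calc c * ‖y‖ * ‖y‖ = c * ‖y‖ ^ 2 := by ring
    _ ≤ ‖(inner A x y : A)‖ := hc
    _ ≤ ‖(inner A x y : A) + t • inner A y y‖ :=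
        CStarAlgebra.norm_le_norm_of_nonneg_of_le hxy
          (le_add_of_nonneg_right (smul_nonneg ht inner_self_nonneg))
    _ = ‖(inner A (x + t • y) y : A)‖ := by rw [inner_add_left, inner_smul_left_real]
    _ ≤ ‖x + t • y‖ * ‖y‖ := norm_inner_le A

section Adjoint

variable {H K : Type*}
  [NormedAddCommGroup H] [NormedSpace ℂ H] [SMul Aᵐᵒᵖ H] [CStarModuleOld A H]
  [NormedAddCommGroup K] [NormedSpace ℂ K] [SMul Aᵐᵒᵖ K] [CStarModuleOld A K]

theorem norm_sq_le_norm_mul_norm_adjoint_apply {T : H → K} {Tadj : K → H}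
    (hadj : ∀ x y, (inner A (T x) y : A) = inner A x (Tadj y)) (x : H) :
    ‖T x‖ ^ 2 ≤ ‖x‖ * ‖Tadj (T x)‖ := by
  rw [norm_sq_eq_norm_inner_self (A := A), hadj]
  exact norm_inner_le A

theorem exists_pos_mul_norm_le_norm_adjoint_of_surjective [CompleteSpace H] [CompleteSpace K]
    {T : H →L[ℂ] K} {Tadj : K → H} (hadj : ∀ x y, (inner A (T x) y : A) = inner A x (Tadj y))
    (hT : Function.Surjective T) : ∃ m : ℝ, 0 < m ∧ ∀ y, m * ‖y‖ ≤ ‖Tadj y‖ := by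
  obtain ⟨C, hC, hpre⟩ := T.exists_preimage_norm_le hT
  refine ⟨C⁻¹, inv_pos.mpr hC, fun y => ?_⟩
  obtain ⟨x, rfl, hx⟩ := hpre y
  rcases eq_or_ne (T x) 0 with h0 | h0
  · simp [h0]
  rw [inv_mul_le_iff₀ hC]
  refine le_of_mul_le_mul_left ?_ (norm_pos_iff.mpr h0)
  calc ‖T x‖ * ‖T x‖ = ‖T x‖ ^ 2 := (sq _).symm
    _ ≤ ‖x‖ * ‖Tadj (T x)‖ := norm_sq_le_norm_mul_norm_adjoint_apply hadj x
    _ ≤ C * ‖T x‖ * ‖Tadj (T x)‖ := by gcongr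
    _ = ‖T x‖ * (C * ‖Tadj (T x)‖) := by ring

theorem surjective_of_mul_norm_le_norm_adjoint [CompleteSpace K] {T : H →L[ℂ] K}
    {Tadj : K →L[ℂ] H} (hadj : ∀ x y, (inner A (T x) y : A) = inner A x (Tadj y)) {m : ℝ}
    (hm : 0 < m) (hTadj : ∀ y, m * ‖y‖ ≤ ‖Tadj y‖) : Function.Surjective T := by
  refine Function.Surjective.of_comp (g := Tadj) ?_
  refine (T ∘L Tadj).surjective_of_forall_nonneg_mul_norm_le_norm_add_smul (pow_pos hm 2)
    fun t ht y => mul_norm_le_norm_add_smul (A := A) ht ?_ ?_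
  · rw [ContinuousLinearMap.comp_apply, hadj]
    exact inner_self_nonneg
  · rw [ContinuousLinearMap.comp_apply, hadj, ← norm_sq_eq_norm_inner_self, ← mul_pow]
    exact pow_le_pow_left₀ (by positivity) (hTadj y) 2

end Adjoint

end CStarModuleOld

/-- An adjointable map `T` between Hilbert C*-modules is surjective iff its adjoint `T*`
is bounded below in norm. -/
theorem adjointable_surjective_iff_adjoint_bounded_below_norm
    {A H K : Type*} [NonUnitalCStarAlgebra A] [PartialOrder A] [StarOrderedRing A]
    [NormedAddCommGroup H] [NormedSpace ℂ H] [SMul Aᵐᵒᵖ H] [CStarModuleOld A H] [CompleteSpace H]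
    [NormedAddCommGroup K] [NormedSpace ℂ K] [SMul Aᵐᵒᵖ K] [CStarModuleOld A K] [CompleteSpace K]
    (T : H →L[ℂ] K) (Tadj : K →L[ℂ] H)
    (hadj : ∀ (x : H) (y : K), (inner A (T x) y : A) = inner A x (Tadj y)) :
    Function.Surjective T ↔ ∃ m : ℝ, 0 < m ∧ ∀ y : K, m * ‖y‖ ≤ ‖Tadj y‖ := by
  refine ⟨CStarModuleOld.exists_pos_mul_norm_le_norm_adjoint_of_surjective hadj, ?_⟩
  rintro ⟨m, hm, hTadj⟩
  exact CStarModuleOld.surjective_of_mul_norm_le_norm_adjoint hadj hm hTadj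
end

section
/- Let H and K be Hilbert C*-modules over a C*-algebra A and let T : H → K be an adjointable map. Then T is surjective if and only if T* is bounded below with respect to the inner product, i.e., there exists m' > 0 such that ⟨T*y, T*y⟩ ≥ m'⟨y, y⟩ (as positive elements of A) for all y ∈ K. -/
/-!
Write `S = T T*`, so that `⟪S y, y⟫ = ⟪T* y, T* y⟫`.

If `m ⟪y, y⟫ ≤ ⟪S y, y⟫`, expanding `⟪y - t S y, y - t S y⟫` gives `‖1 - t S‖ < 1` for a small
`t > 0`, so `S` is invertible and `T` is onto.

Conversely, if `T` is onto, the open mapping theorem gives `T x = y` with `‖x‖ ≤ C ‖y‖`, and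
Cauchy–Schwarz applied to `⟪y, y⟫ = ⟪x, T* y⟫` gives
`⟪y, y⟫² ≤ C² ‖⟪y, y⟫‖ ⟪T* y, T* y⟫`. An inequality between squares does not give one between
the elements themselves, but it also holds for every `y a` with `a` in the unitization of `A`.
For `a = (⟪T* y, T* y⟫ + ε)^(-1/2)` the right-hand side is at most `C² ‖a ⟪y, y⟫ a‖`, which
forces `a ⟪y, y⟫ a ≤ C²`; conjugating back and letting `ε → 0` gives
`⟪y, y⟫ ≤ C² ⟪T* y, T* y⟫`.
-/

open scoped RightActions CStarAlgebra

/-- The Hilbert C⋆-module class as Mathlib defined it in December 2024 (right `A`-action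
given by `SMul Aᵐᵒᵖ E`, `⟪x, y <• a⟫ = ⟪x, y⟫ * a`); Mathlib's `CStarModule` now uses a left
action, so the old notion is restated here. -/
class RightCStarModule (A E : Type*) [NonUnitalSemiring A] [StarRing A]
    [Module ℂ A] [AddCommGroup E] [Module ℂ E] [PartialOrder A] [SMul Aᵐᵒᵖ E] [Norm A] [Norm E]
    extends Inner A E where
  inner_add_right {x} {y} {z} : inner x (y + z) = inner x y + inner x z
  inner_self_nonneg {x} : 0 ≤ inner x x
  inner_self {x} : inner x x = 0 ↔ x = 0
  inner_op_smul_right {a : A} {x y : E} : inner x (MulOpposite.op a • y) = inner x y * a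
  inner_smul_right_complex {z : ℂ} {x} {y} : inner x (z • y) = z • inner x y
  star_inner x y : star (inner x y) = inner y x
  norm_eq_sqrt_norm_inner_self x : ‖x‖ = √‖inner x x‖

namespace Unitization

variable {A : Type*} [NonUnitalCStarAlgebra A] [PartialOrder A] [StarOrderedRing A]

lemma inr_le_inr_iff {a b : A} : (a : A⁺¹) ≤ b ↔ a ≤ b := by
  rw [← sub_nonneg, ← inr_sub, inr_nonneg_iff, sub_nonneg]

end Unitization

section CStarAlgebra

variable {B : Type*} [CStarAlgebra B] [PartialOrder B] [StarOrderedRing B]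

lemma exists_sqrt_add_algebraMap_inv {d : B} (hd : 0 ≤ d) {ε : ℝ} (hε : 0 < ε) :
    ∃ g a : B, IsSelfAdjoint g ∧ IsSelfAdjoint a ∧ g * a = 1 ∧ a * g = 1 ∧
      g * g = d + algebraMap ℝ B ε := by
  have hnn : ∀ t ∈ spectrum ℝ d, 0 < t + ε := fun t ht ↦
    by linarith [spectrum_nonneg_of_nonneg hd ht]
  have hpos : ∀ t ∈ spectrum ℝ d, 0 < √(t + ε) := fun t ht ↦ Real.sqrt_pos.mpr (hnn t ht)
  have hg : ContinuousOn (fun t ↦ √(t + ε)) (spectrum ℝ d) := by fun_prop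
  have ha : ContinuousOn (fun t ↦ (√(t + ε))⁻¹) (spectrum ℝ d) :=
    hg.inv₀ fun t ht ↦ (hpos t ht).ne'
  have hd' : IsSelfAdjoint d := .of_nonneg hd
  refine ⟨cfc (fun t ↦ √(t + ε)) d, cfc (fun t ↦ (√(t + ε))⁻¹) d, .cfc, .cfc, ?_, ?_, ?_⟩
  · rw [← cfc_mul _ _ d hg ha, ← cfc_one ℝ d]
    exact cfc_congr fun t ht ↦ mul_inv_cancel₀ (hpos t ht).ne'
  · rw [← cfc_mul _ _ d ha hg, ← cfc_one ℝ d]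
    exact cfc_congr fun t ht ↦ inv_mul_cancel₀ (hpos t ht).ne'
  · rw [← cfc_mul _ _ d hg hg, cfc_congr fun t ht ↦ Real.mul_self_sqrt (hnn t ht).le,
      cfc_add d _ _, cfc_id' ℝ d, cfc_const ε d]

lemma IsSelfAdjoint.le_algebraMap_of_mul_self_le {p d : B} (hp : IsSelfAdjoint p) (hd : d ≤ 1)
    {c : ℝ} (hc : 0 ≤ c) (h : p * p ≤ (c * ‖p‖) • d) : p ≤ algebraMap ℝ B c := by
  have hpp : p * p ≤ algebraMap ℝ B (c * ‖p‖) := by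
    calc p * p ≤ (c * ‖p‖) • d := h
      _ ≤ (c * ‖p‖) • 1 := smul_le_smul_of_nonneg_left hd (by positivity)
      _ = algebraMap ℝ B (c * ‖p‖) := (Algebra.algebraMap_eq_smul_one _).symm
  have hpp_nonneg : 0 ≤ p * p := by simpa [hp.star_eq] using star_mul_self_nonneg p
  have hnorm : ‖p‖ ^ 2 ≤ c * ‖p‖ := by
    rw [← hp.norm_mul_self]
    exact (CStarAlgebra.norm_le_iff_le_algebraMap _ (by positivity) hpp_nonneg).mpr hpp
  have : ‖p‖ ≤ c := by nlinarith [norm_nonneg p]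
  exact hp.le_algebraMap_norm_self.trans (algebraMap_mono B this)

open Filter Topology in
lemma IsSelfAdjoint.le_smul_of_forall_conj_mul_self_le {p d : B} (hp : IsSelfAdjoint p)
    (hd : 0 ≤ d) {c : ℝ} (hc : 0 ≤ c)
    (h : ∀ a : B, IsSelfAdjoint a → a * p * a * (a * p * a) ≤ (c * ‖a * p * a‖) • (a * d * a)) :
    p ≤ c • d := by
  have hε_le : ∀ ε > 0, p ≤ c • (d + algebraMap ℝ B ε) := by
    intro ε hε
    obtain ⟨g, a, hg, ha, hga, hag, hgg⟩ := exists_sqrt_add_algebraMap_inv hd hε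
    have hada : a * d * a ≤ 1 := calc
      a * d * a ≤ a * (d + algebraMap ℝ B ε) * a := by
        simpa [ha.star_eq] using star_left_conjugate_le_conjugate
          (le_add_of_nonneg_right (algebraMap_nonneg B hε.le)) a
      _ = 1 := by rw [← hgg, ← mul_assoc, hag, one_mul, hga]
    have hapa : a * p * a ≤ algebraMap ℝ B c := by
      refine IsSelfAdjoint.le_algebraMap_of_mul_self_le ?_ hada hc (h a ha)
      simpa [ha.star_eq] using hp.conjugate' a
    calc p = g * (a * p * a) * g := by
          rw [← mul_assoc, ← mul_assoc, hga, one_mul, mul_assoc, hag, mul_one]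
      _ ≤ g * algebraMap ℝ B c * g := by
          simpa [hg.star_eq] using star_left_conjugate_le_conjugate hapa g
      _ = c • (d + algebraMap ℝ B ε) := by
          rw [Algebra.algebraMap_eq_smul_one, mul_smul_comm, smul_mul_assoc, mul_one, hgg]
  have hlim : Tendsto (fun ε : ℝ ↦ c • (d + algebraMap ℝ B ε)) (𝓝[>] 0) (𝓝 (c • d)) := by
    have : Continuous fun ε : ℝ ↦ c • (d + algebraMap ℝ B ε) := by fun_prop
    simpa using (this.tendsto 0).mono_left nhdsWithin_le_nhds
  exact ge_of_tendsto hlim (eventually_nhdsWithin_of_forall hε_le)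

end CStarAlgebra

namespace RightCStarModule

variable {A : Type*} [NonUnitalCStarAlgebra A] [PartialOrder A]

local notation "⟪" x ", " y "⟫" => inner A x y

section Basic

variable {E : Type*} [AddCommGroup E] [Module ℂ E] [SMul Aᵐᵒᵖ E] [Norm E] [RightCStarModule A E]

lemma inner_add_left {x y z : E} : ⟪x + y, z⟫ = ⟪x, z⟫ + ⟪y, z⟫ := by
  rw [← star_inner, inner_add_right, star_add, star_inner, star_inner]

lemma inner_sub_right {x y z : E} : ⟪x, y - z⟫ = ⟪x, y⟫ - ⟪x, z⟫ :=
  eq_sub_of_add_eq (by rw [← inner_add_right, sub_add_cancel])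

lemma inner_sub_left {x y z : E} : ⟪x - y, z⟫ = ⟪x, z⟫ - ⟪y, z⟫ :=
  eq_sub_of_add_eq (by rw [← inner_add_left, sub_add_cancel])

lemma inner_op_smul_left {a : A} {x y : E} : ⟪x <• a, y⟫ = star a * ⟪x, y⟫ := by
  rw [← star_inner, inner_op_smul_right, star_mul, star_inner]

lemma inner_smul_left_complex {z : ℂ} {x y : E} : ⟪z • x, y⟫ = star z • ⟪x, y⟫ := by
  rw [← star_inner, inner_smul_right_complex, star_smul, star_inner]

lemma inner_smul_right_real {r : ℝ} {x y : E} : ⟪x, r • y⟫ = r • ⟪x, y⟫ := by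
  rw [← Complex.coe_smul, inner_smul_right_complex, Complex.coe_smul]

lemma inner_smul_left_real {r : ℝ} {x y : E} : ⟪r • x, y⟫ = r • ⟪x, y⟫ := by
  rw [← star_inner, inner_smul_right_real, star_smul, star_trivial, star_inner]

lemma inner_zero_left {y : E} : ⟪0, y⟫ = 0 := by
  simpa using inner_add_left (A := A) (x := (0 : E)) (y := 0) (z := y)

lemma norm_sq_eq {x : E} : ‖x‖ ^ 2 = ‖⟪x, x⟫‖ := by
  rw [norm_eq_sqrt_norm_inner_self (A := A) x, Real.sq_sqrt (norm_nonneg _)]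

lemma ext_inner_left {x y : E} (h : ∀ z, ⟪z, x⟫ = ⟪z, y⟫) : x = y := by
  rw [← sub_eq_zero, ← inner_self (A := A), inner_sub_right, h, sub_self]

def opSMulUnitization (x : E) (a : A⁺¹) : E := a.fst • x + x <• a.snd

lemma inr_inner_opSMulUnitization (x y : E) (a b : A⁺¹) :
    ((⟪opSMulUnitization x a, opSMulUnitization y b⟫ : A) : A⁺¹) = star a * ⟪x, y⟫ * b := by
  ext <;> simp [opSMulUnitization, inner_add_left, inner_add_right, inner_smul_left_complex,
    inner_smul_right_complex, inner_op_smul_left, inner_op_smul_right]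

variable [StarOrderedRing A]

lemma inner_mul_inner_swap_le {x y : E} : ⟪y, x⟫ * ⟪x, y⟫ ≤ ‖x‖ ^ 2 • ⟪y, y⟫ := by
  rcases eq_or_ne x 0 with rfl | hx
  · rw [← star_inner, inner_zero_left, star_zero, zero_mul]
    exact smul_nonneg (sq_nonneg _) inner_self_nonneg
  set a := ⟪x, y⟫ with ha
  have hyx : ⟪y, x⟫ = star a := (star_inner x y).symm
  set r := ‖x‖ ^ 2 with hr_def
  have hr : 0 < r := by
    rw [hr_def, norm_sq_eq (A := A)]
    exact norm_pos_iff.mpr (mt inner_self.mp hx)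
  have h : 0 ≤ r • (r • ⟪y, y⟫ - star a * a) := calc
    0 ≤ ⟪x <• a - r • y, x <• a - r • y⟫ := inner_self_nonneg
    _ = star a * ⟪x, x⟫ * a - r • (star a * a) - r • (star a * a) + r • r • ⟪y, y⟫ := by
      simp only [inner_sub_left, inner_sub_right, inner_op_smul_left, inner_op_smul_right,
        inner_smul_left_real, inner_smul_right_real, ← ha, hyx, sub_mul, smul_sub,
        smul_mul_assoc, mul_assoc]
      abel
    _ ≤ r • (star a * a) - r • (star a * a) - r • (star a * a) + r • r • ⟪y, y⟫ := by
      gcongr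
      rw [hr_def, norm_sq_eq (A := A)]
      exact CStarAlgebra.star_left_conjugate_le_norm_smul (hb := star_inner x x)
    _ = r • (r • ⟪y, y⟫ - star a * a) := by
      rw [smul_sub]
      abel
  rw [hyx]
  exact sub_nonneg.mp ((smul_nonneg_iff_nonneg_of_pos_left hr).mp h)

end Basic

section Adjoint

variable {H K : Type*} [AddCommGroup H] [Module ℂ H] [SMul Aᵐᵒᵖ H] [Norm H] [RightCStarModule A H]
  [AddCommGroup K] [Module ℂ K] [SMul Aᵐᵒᵖ K] [Norm K] [RightCStarModule A K]
  {F : Type*} [FunLike F K H] {T : H → K} {Tadj : F}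

lemma map_op_smul_of_inner_map_eq (hadj : ∀ x y, ⟪T x, y⟫ = ⟪x, Tadj y⟫) (y : K) (a : A) :
    Tadj (y <• a) = Tadj y <• a :=
  ext_inner_left fun x ↦ by rw [← hadj, inner_op_smul_right, inner_op_smul_right, hadj]

lemma map_opSMulUnitization_of_inner_map_eq [LinearMapClass F ℂ K H]
    (hadj : ∀ x y, ⟪T x, y⟫ = ⟪x, Tadj y⟫) (y : K) (a : A⁺¹) :
    Tadj (opSMulUnitization y a) = opSMulUnitization (Tadj y) a := by
  rw [opSMulUnitization, map_add, map_smul, map_op_smul_of_inner_map_eq hadj, opSMulUnitization]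

variable [StarOrderedRing A]

lemma inner_self_mul_inner_self_le_of_map_eq (hadj : ∀ x y, ⟪T x, y⟫ = ⟪x, Tadj y⟫)
    {x : H} {y : K} (hx : T x = y) : ⟪y, y⟫ * ⟪y, y⟫ ≤ ‖x‖ ^ 2 • ⟪Tadj y, Tadj y⟫ := by
  have hxy : ⟪y, y⟫ = ⟪x, Tadj y⟫ := by rw [← hadj, hx]
  calc ⟪y, y⟫ * ⟪y, y⟫ = ⟪Tadj y, x⟫ * ⟪x, Tadj y⟫ := by rw [← star_inner x, ← hxy, star_inner]
    _ ≤ ‖x‖ ^ 2 • ⟪Tadj y, Tadj y⟫ := inner_mul_inner_swap_le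

variable [LinearMapClass F ℂ K H] {C : ℝ}

lemma conj_inner_self_mul_self_le (hadj : ∀ x y, ⟪T x, y⟫ = ⟪x, Tadj y⟫)
    (hC : ∀ y, ∃ x, T x = y ∧ ‖x‖ ≤ C * ‖y‖) (y : K) {a : A⁺¹} (ha : IsSelfAdjoint a) :
    a * ⟪y, y⟫ * a * (a * ⟪y, y⟫ * a) ≤
      (C ^ 2 * ‖a * (⟪y, y⟫ : A⁺¹) * a‖) • (a * ⟪Tadj y, Tadj y⟫ * a) := by
  obtain ⟨x, hx, hxC⟩ := hC (opSMulUnitization y a)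
  have hx0 : 0 ≤ ‖x‖ := by
    rw [norm_eq_sqrt_norm_inner_self (A := A) x]
    positivity
  have hxa : ‖x‖ ^ 2 ≤ C ^ 2 * ‖a * (⟪y, y⟫ : A⁺¹) * a‖ := calc
    ‖x‖ ^ 2 ≤ (C * ‖opSMulUnitization y a‖) ^ 2 := pow_le_pow_left₀ hx0 hxC 2
    _ = C ^ 2 * ‖a * (⟪y, y⟫ : A⁺¹) * a‖ := by
      rw [mul_pow, norm_sq_eq (A := A), ← Unitization.norm_inr (𝕜 := ℂ),
        inr_inner_opSMulUnitization, ha.star_eq]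
  have key := Unitization.inr_le_inr_iff.mpr (inner_self_mul_inner_self_le_of_map_eq hadj hx)
  rw [Unitization.inr_mul, Unitization.inr_smul, map_opSMulUnitization_of_inner_map_eq hadj,
    inr_inner_opSMulUnitization, inr_inner_opSMulUnitization, ha.star_eq] at key
  refine key.trans (smul_le_smul_of_nonneg_right hxa ?_)
  simpa [ha.star_eq] using star_left_conjugate_nonneg
    (Unitization.inr_nonneg_iff.mpr (inner_self_nonneg (A := A) (x := Tadj y))) a

lemma inner_self_le_smul_inner_map_self (hadj : ∀ x y, ⟪T x, y⟫ = ⟪x, Tadj y⟫)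
    (hC : ∀ y, ∃ x, T x = y ∧ ‖x‖ ≤ C * ‖y‖) (y : K) : ⟪y, y⟫ ≤ C ^ 2 • ⟪Tadj y, Tadj y⟫ := by
  rw [← Unitization.inr_le_inr_iff, Unitization.inr_smul]
  exact IsSelfAdjoint.le_smul_of_forall_conj_mul_self_le
    (.of_nonneg (Unitization.inr_nonneg_iff.mpr inner_self_nonneg))
    (Unitization.inr_nonneg_iff.mpr inner_self_nonneg) (sq_nonneg C)
    fun _ ha ↦ conj_inner_self_mul_self_le hadj hC y ha

end Adjoint

section Surjectivity

variable [StarOrderedRing A] {E : Type*} [NormedAddCommGroup E] [NormedSpace ℂ E] [SMul Aᵐᵒᵖ E]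
  [RightCStarModule A E]

lemma norm_sub_smul_apply_sq_le {S : E →L[ℂ] E} {m t : ℝ}
    (hS : ∀ z, m • ⟪z, z⟫ ≤ ⟪S z, z⟫) (ht : 0 ≤ t) (htm : 2 * t * m ≤ 1) (z : E) :
    ‖z - t • S z‖ ^ 2 ≤ (1 - 2 * t * m + t ^ 2 * ‖S‖ ^ 2) * ‖z‖ ^ 2 := by
  have hsym : ⟪z, S z⟫ = ⟪S z, z⟫ := by
    have : IsSelfAdjoint ⟪S z, z⟫ := by
      simpa using (IsSelfAdjoint.of_nonneg (sub_nonneg.mpr (hS z))).add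
        ((IsSelfAdjoint.all m).smul (.of_nonneg (inner_self_nonneg (A := A) (x := z))))
    rw [← star_inner, this.star_eq]
  have hle : ⟪z - t • S z, z - t • S z⟫ ≤
      (1 - 2 * t * m) • ⟪z, z⟫ + t ^ 2 • ⟪S z, S z⟫ := calc
    _ = ⟪z, z⟫ - (2 * t) • ⟪S z, z⟫ + t ^ 2 • ⟪S z, S z⟫ := by
        simp only [inner_sub_left, inner_sub_right, inner_smul_left_real, inner_smul_right_real,
          hsym]
        module
    _ ≤ ⟪z, z⟫ - (2 * t) • (m • ⟪z, z⟫) + t ^ 2 • ⟪S z, S z⟫ := by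
        gcongr
        exact hS z
    _ = (1 - 2 * t * m) • ⟪z, z⟫ + t ^ 2 • ⟪S z, S z⟫ := by module
  calc ‖z - t • S z‖ ^ 2 = ‖⟪z - t • S z, z - t • S z⟫‖ := norm_sq_eq
    _ ≤ ‖(1 - 2 * t * m) • ⟪z, z⟫ + t ^ 2 • ⟪S z, S z⟫‖ :=
        CStarAlgebra.norm_le_norm_of_nonneg_of_le inner_self_nonneg hle
    _ ≤ (1 - 2 * t * m) * ‖z‖ ^ 2 + t ^ 2 * ‖S z‖ ^ 2 := by
        refine (norm_add_le _ _).trans_eq ?_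
        rw [norm_smul, norm_smul, Real.norm_of_nonneg (by linarith),
          Real.norm_of_nonneg (by positivity), ← norm_sq_eq, ← norm_sq_eq]
    _ ≤ (1 - 2 * t * m) * ‖z‖ ^ 2 + t ^ 2 * (‖S‖ * ‖z‖) ^ 2 := by
        gcongr
        exact S.le_opNorm z
    _ = (1 - 2 * t * m + t ^ 2 * ‖S‖ ^ 2) * ‖z‖ ^ 2 := by ring

lemma isUnit_of_smul_inner_self_le [CompleteSpace E] {S : E →L[ℂ] E} {m : ℝ} (hm : 0 < m)
    (hS : ∀ z, m • ⟪z, z⟫ ≤ ⟪S z, z⟫) : IsUnit S := by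
  -- any `t > 0` with `2 t m ≤ 1` and `t ‖S‖² < 2 m` makes `‖1 - t S‖ < 1`
  set t := m / (2 * m ^ 2 + ‖S‖ ^ 2)
  have ht : 0 < t := by positivity
  have htS : t * (2 * m ^ 2 + ‖S‖ ^ 2) = m := div_mul_cancel₀ m (by positivity)
  have htm : 2 * t * m ≤ 1 := by nlinarith [sq_nonneg ‖S‖]
  set q := 1 - 2 * t * m + t ^ 2 * ‖S‖ ^ 2
  have hq0 : 0 ≤ q := by positivity
  have hq : q = 1 - t * m - 2 * (t * m) ^ 2 := by linear_combination t * htS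
  have hq1 : q < 1 := by nlinarith [mul_pos ht hm]
  have hnorm : ‖1 - t • S‖ < 1 := by
    refine (ContinuousLinearMap.opNorm_le_bound _ (Real.sqrt_nonneg q) fun z ↦ ?_).trans_lt
      ((Real.sqrt_lt' one_pos).mpr (by rwa [one_pow]))
    rw [← Real.sqrt_sq (norm_nonneg _), ← Real.sqrt_sq (norm_nonneg z), ← Real.sqrt_mul hq0]
    exact Real.sqrt_le_sqrt (norm_sub_smul_apply_sq_le hS ht.le htm z)
  have := isUnit_one_sub_of_norm_lt_one hnorm
  rw [sub_sub_cancel] at this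
  exact (isUnit_smul_iff (Units.mk0 t ht.ne') S).mp this

end Surjectivity

end RightCStarModule

open RightCStarModule in
/-- An adjointable map `T` between Hilbert C*-modules is surjective iff its adjoint `T*`
is bounded below with respect to the inner product: there is `m' > 0` with
`⟨T*y, T*y⟩ ≥ m'⟨y, y⟩` for all `y`. -/
theorem adjointable_surjective_iff_adjoint_bounded_below_inner
    {A H K : Type*} [NonUnitalCStarAlgebra A] [PartialOrder A] [StarOrderedRing A]
    [NormedAddCommGroup H] [NormedSpace ℂ H] [SMul Aᵐᵒᵖ H] [RightCStarModule A H] [CompleteSpace H]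
    [NormedAddCommGroup K] [NormedSpace ℂ K] [SMul Aᵐᵒᵖ K] [RightCStarModule A K] [CompleteSpace K]
    (T : H →L[ℂ] K) (Tadj : K →L[ℂ] H)
    (hadj : ∀ (x : H) (y : K), (inner A (T x) y : A) = inner A x (Tadj y)) :
    Function.Surjective T ↔
      ∃ m' : ℝ, 0 < m' ∧ ∀ y : K, m' • (inner A y y : A) ≤ (inner A (Tadj y) (Tadj y) : A) := by
  constructor
  · intro hT
    obtain ⟨C, hC, hpre⟩ := T.exists_preimage_norm_le hT
    refine ⟨(C ^ 2)⁻¹, by positivity, fun y ↦ ?_⟩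
    rw [inv_smul_le_iff_of_pos (by positivity)]
    exact inner_self_le_smul_inner_map_self hadj hpre y
  · rintro ⟨m, hm, hbound⟩
    have hS : IsUnit (T ∘L Tadj) := isUnit_of_smul_inner_self_le (A := A) hm fun z ↦ by
      simpa only [ContinuousLinearMap.comp_apply, hadj] using hbound z
    exact .of_comp (ContinuousLinearMap.isUnit_iff_bijective.mp hS).surjective
end
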